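/- Let Γ be an abelian group, (G=(V,E),ψ) a Γ-gain graph, and μ: 2^Γ → ℝ₊ a symmetric polymatroidal function with μ({γ}) ≤ 1 for every γ ∈ Γ. Then the function ℓ_μ defined on subsets F of E by ℓ_μ(F) = |V(F)| − c(F) + μ(⟨⟨F⟩⟩), where ⟨⟨F⟩⟩ is the subgroup generated by the gains of all closed walks in F (over all base vertices), is monotone and submodular. -/

import Mathlib

/-- A directed multigraph: edges with a source and target map. -/
structure GG (V E : Type*) where
  src : E → V
  tgt : E → V

namespace GG

variable {V E : Type*}

/-- The initial vertex of a step (an edge together with a direction). -/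
def stepHead (G : GG V E) (s : E × Bool) : V := if s.2 then G.src s.1 else G.tgt s.1

/-- The final vertex of a step. -/
def stepLast (G : GG V E) (s : E × Bool) : V := if s.2 then G.tgt s.1 else G.src s.1

/-- Walks from `u` to `w` using only edges of `X`. -/
inductive IsWalkFrom (G : GG V E) (X : Set E) : V → V → List (E × Bool) → Prop
  | nil (v : V) : IsWalkFrom G X v v []
  | cons {u w : V} {s : E × Bool} {l : List (E × Bool)} (he : s.1 ∈ X)
      (h1 : G.stepHead s = u) (hl : IsWalkFrom G X (G.stepLast s) w l) :
      IsWalkFrom G X u w (s :: l)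

variable {Γ : Type*} [Group Γ]

/-- The gain of a walk: the product of the edge gains, inverted on backward edges. -/
def gainOf (ψ : E → Γ) : List (E × Bool) → Γ
  | [] => 1
  | s :: l => (if s.2 then ψ s.1 else (ψ s.1)⁻¹) * gainOf ψ l

/-- `⟨X⟩_{ψ,v}`: the subgroup generated by gains of closed walks at `v` using edges of `X`. -/
def walkGroup (G : GG V E) (ψ : E → Γ) (X : Set E) (v : V) : Subgroup Γ :=
  Subgroup.closure {g : Γ | ∃ l, G.IsWalkFrom X v v l ∧ gainOf ψ l = g}

open Classical in
/-- The switching of the gain function `ψ` at vertex `v` with `γ`. -/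
noncomputable def switch (G : GG V E) (ψ : E → Γ) (v : V) (γ : Γ) : E → Γ :=
  fun e => (if G.src e = v then γ else 1) * ψ e * (if G.tgt e = v then γ⁻¹ else 1)

/-- Two gain functions are equivalent if one is obtained from the other by a
finite sequence of switchings. -/
def Equivalent (G : GG V E) (ψ ψ' : E → Γ) : Prop :=
  Relation.ReflTransGen (fun a b => ∃ v γ, b = G.switch a v γ) ψ ψ'

/-- `V(X)`: the set of endvertices of edges of `X`. -/
def VSet (G : GG V E) (X : Set E) : Set V := {v | ∃ e ∈ X, G.src e = v ∨ G.tgt e = v}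

/-- `⟨⟨F⟩⟩`: the subgroup generated by the gains of all closed walks using edges of `F`
(over all base vertices). -/
def allWalkGroup (G : GG V E) (ψ : E → Γ) (F : Set E) : Subgroup Γ :=
  Subgroup.closure {g : Γ | ∃ (v : V) (l : List (E × Bool)),
    G.IsWalkFrom F v v l ∧ gainOf ψ l = g}

variable [Fintype V] [Fintype E] [DecidableEq V] [DecidableEq E]

/-- The finset of endvertices of the edges of `F`. -/
def vertexFinset (G : GG V E) (F : Finset E) : Finset V :=
  F.image G.src ∪ F.image G.tgt

/-- Two edges of `F` lie in the same connected component of `F`. -/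
def compRel (G : GG V E) (F : Finset E) (e f : {x // x ∈ F}) : Prop :=
  ∃ l, G.IsWalkFrom ↑F (G.src e.1) (G.src f.1) l

/-- `c(F)`: the number of connected components of the edge set `F`. -/
noncomputable def numComp (G : GG V E) (F : Finset E) : ℕ :=
  Nat.card (Quot (G.compRel F))

/-- `ℓ_μ(F) = |V(F)| − c(F) + μ(⟨⟨F⟩⟩)`. -/
noncomputable def ellMu (G : GG V E) (ψ : E → Γ) (μ : Set Γ → ℝ) (F : Finset E) : ℝ :=
  ((G.vertexFinset F).card : ℝ) - (G.numComp F : ℝ) + μ ↑(G.allWalkGroup ψ ↑F)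

end GG

/-- `μ` is a symmetric polymatroidal function over the group `Γ`. -/
def SymPolymatroidal {Γ : Type*} [Group Γ] (μ : Set Γ → ℝ) : Prop :=
  μ ∅ = 0 ∧ (∀ X : Set Γ, 0 ≤ μ X) ∧ (∀ X Y : Set Γ, X ⊆ Y → μ X ≤ μ Y) ∧
  (∀ X Y : Set Γ, μ (X ∪ Y) + μ (X ∩ Y) ≤ μ X + μ Y) ∧
  (∀ X : Set Γ, X.Nonempty → μ ↑(Subgroup.closure X) = μ X) ∧
  (∀ (X : Set Γ) (γ : Γ), X.Nonempty → μ ((fun x => γ * x * γ⁻¹) '' X) = μ X)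

/-!
Add an edge `e = st` to `F`. If `s` and `t` are joined by a walk `P` of `F`, then `|V(F)| − c(F)`
does not change and, `Γ` being abelian, every closed walk of `F + e` has the gain of a closed walk
of `F` times a power of `γ = ψ(P)⁻¹ ψ(e)`, so `⟨⟨F + e⟩⟩ = ⟨⟨⟨F⟩⟩ ∪ {γ}⟩`. The increment
`μ(⟨⟨F⟩⟩ ∪ {γ}) − μ(⟨⟨F⟩⟩)` lies in `[0, 1]` and decreases as `F` grows, by submodularity of `μ`.
Otherwise `⟨⟨F⟩⟩` does not change and `|V(F)| − c(F)` grows by one. Non-negative, decreasing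
increments give monotonicity and submodularity. The rank term is handled through
`|V(F)| − c(F) = |V| − c_V(F)`, where `c_V(F)` counts the classes of all vertices under
`F`-connectivity: vertices outside `V(F)` are singleton classes, and adding `e` merges at most two.
-/

namespace Finset

variable {α β : Type*} [DecidableEq α]

theorem monotone_of_le_insert [Preorder β] {f : Finset α → β}
    (h : ∀ s a, f s ≤ f (insert a s)) : Monotone f := by
  intro s t hst
  have key : ∀ d : Finset α, f s ≤ f (s ∪ d) := by
    intro d
    induction d using Finset.induction_on with
    | empty => rw [union_empty]
    | insert a d _ ih => exact (union_insert a s d).symm ▸ ih.trans (h _ a)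
  simpa only [union_sdiff_of_subset hst] using key (t \ s)

theorem submodular_of_insert_sub_le [AddCommGroup β] [PartialOrder β] [IsOrderedAddMonoid β]
    {f : Finset α → β} (h : ∀ s t a, s ⊆ t → f (insert a t) - f t ≤ f (insert a s) - f s)
    (s t : Finset α) : f (s ∪ t) + f (s ∩ t) ≤ f s + f t := by
  have key : ∀ c ⊆ s, ∀ d : Finset α, f (s ∪ d) - f s ≤ f (c ∪ d) - f c := by
    intro c hc d
    induction d using Finset.induction_on with
    | empty => simp
    | insert a d _ ih =>
      calc f (s ∪ insert a d) - f s
          = (f (insert a (s ∪ d)) - f (s ∪ d)) + (f (s ∪ d) - f s) := by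
            rw [union_insert, sub_add_sub_cancel]
        _ ≤ (f (insert a (c ∪ d)) - f (c ∪ d)) + (f (c ∪ d) - f c) :=
            add_le_add (h _ _ a (union_subset_union_left hc)) ih
        _ = f (c ∪ insert a d) - f c := by rw [union_insert, sub_add_sub_cancel]
  have := key (s ∩ t) inter_subset_left t
  rwa [union_eq_right.2 inter_subset_right, sub_le_sub_iff, add_comm (f t)] at this

end Finset

theorem Setoid.card_quotient_eq_add_one {α : Type*} [Finite α] {r r' : Setoid α} (hle : r ≤ r')
    {a b : α} (hab : ¬ r a b) (hab' : r' a b)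
    (hr' : ∀ x y, r' x y → r x y ∨ (r x a ∧ r b y) ∨ (r x b ∧ r a y)) :
    Nat.card (Quotient r) = Nat.card (Quotient r') + 1 := by
  classical
  let f : {q : Quotient r // q ≠ Quotient.mk r b} → Quotient r' :=
    fun q => Quotient.map' id hle q.1
  have hf : Function.Bijective f := by
    constructor
    · rintro ⟨⟨x⟩, hx⟩ ⟨⟨y⟩, hy⟩ hxy
      have hxb : ¬ r x b := fun h => hx (Quotient.sound h)
      have hyb : ¬ r y b := fun h => hy (Quotient.sound h)
      rcases hr' x y (Quotient.exact hxy) with h | ⟨-, h⟩ | ⟨h, -⟩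
      · exact Subtype.ext (Quotient.sound h)
      · exact absurd (r.symm h) hyb
      · exact absurd h hxb
    · rintro ⟨y⟩
      by_cases hy : r y b
      · exact ⟨⟨Quotient.mk r a, fun h => hab (Quotient.exact h)⟩,
          Quotient.sound (r'.trans hab' (r'.symm (hle hy)))⟩
      · exact ⟨⟨Quotient.mk r y, fun h => hy (Quotient.exact h)⟩, rfl⟩
  rw [← Nat.card_congr (Equiv.optionSubtypeNe (Quotient.mk r b)), Finite.card_option,
    Nat.card_congr (Equiv.ofBijective f hf)]

namespace SymPolymatroidal

variable {Γ : Type*} [Group Γ] {μ : Set Γ → ℝ}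

theorem le_closure_insert (hμ : SymPolymatroidal μ) (H : Subgroup Γ) (γ : Γ) :
    μ ↑H ≤ μ ↑(Subgroup.closure (insert γ (H : Set Γ))) :=
  hμ.2.2.1 _ _ ((Set.subset_insert γ _).trans Subgroup.subset_closure)

theorem closure_insert_le_add_one (hμ : SymPolymatroidal μ) (hμ1 : ∀ γ : Γ, μ {γ} ≤ 1)
    (H : Subgroup Γ) (γ : Γ) : μ ↑(Subgroup.closure (insert γ (H : Set Γ))) ≤ μ ↑H + 1 := by
  obtain ⟨-, hnonneg, -, hsub, hclosure, -⟩ := hμ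
  rw [hclosure _ (Set.insert_nonempty γ _), Set.insert_eq]
  linarith [hsub {γ} H, hnonneg ({γ} ∩ H), hμ1 γ]

theorem closure_insert_sub_le (hμ : SymPolymatroidal μ) {H H' : Subgroup Γ} (hHH' : H ≤ H')
    (γ : Γ) :
    μ ↑(Subgroup.closure (insert γ (H' : Set Γ))) - μ ↑H' ≤
      μ ↑(Subgroup.closure (insert γ (H : Set Γ))) - μ ↑H := by
  obtain ⟨-, -, hmono, hsub, hclosure, -⟩ := hμ
  rw [hclosure _ (Set.insert_nonempty γ _), hclosure _ (Set.insert_nonempty γ _)]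
  have hunion : insert γ (H : Set Γ) ∪ H' = insert γ (H' : Set Γ) := by
    rw [Set.insert_union, Set.union_eq_right.2 hHH']
  have hinter : μ H ≤ μ (insert γ (H : Set Γ) ∩ H') :=
    hmono _ _ (Set.subset_inter (Set.subset_insert _ _) hHH')
  linarith [hunion ▸ hsub (insert γ (H : Set Γ)) H']

end SymPolymatroidal

namespace GG

variable {V E : Type*} {G : GG V E} {X Y : Set E} {u v w : V} {e : E}

def reverseSteps (l : List (E × Bool)) : List (E × Bool) :=
  l.reverse.map fun s => (s.1, !s.2)

theorem stepHead_not (e : E) (b : Bool) : G.stepHead (e, !b) = G.stepLast (e, b) := by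
  cases b <;> rfl

theorem stepLast_not (e : E) (b : Bool) : G.stepLast (e, !b) = G.stepHead (e, b) := by
  cases b <;> rfl

theorem isWalkFrom_singleton {s : E × Bool} (hs : s.1 ∈ X) :
    G.IsWalkFrom X (G.stepHead s) (G.stepLast s) [s] :=
  .cons hs rfl (.nil _)

namespace IsWalkFrom

theorem append {l l' : List (E × Bool)} (h : G.IsWalkFrom X u v l)
    (h' : G.IsWalkFrom X v w l') : G.IsWalkFrom X u w (l ++ l') := by
  induction h with
  | nil => exact h'
  | cons hs h1 _ ih => exact .cons hs h1 (ih h')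

theorem mono (hXY : X ⊆ Y) {l : List (E × Bool)} (h : G.IsWalkFrom X u v l) :
    G.IsWalkFrom Y u v l := by
  induction h with
  | nil v => exact .nil v
  | cons hs h1 _ ih => exact .cons (hXY hs) h1 ih

theorem reverse {l : List (E × Bool)} (h : G.IsWalkFrom X u v l) :
    G.IsWalkFrom X v u (reverseSteps l) := by
  induction h with
  | nil v => exact .nil v
  | @cons u w s l hs h1 _ ih =>
    obtain ⟨e, b⟩ := s
    have hstep := isWalkFrom_singleton (G := G) (s := (e, !b)) hs
    rw [stepHead_not, stepLast_not, h1] at hstep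
    simpa [reverseSteps] using ih.append hstep

end IsWalkFrom

def Conn (G : GG V E) (X : Set E) (u v : V) : Prop :=
  ∃ l, G.IsWalkFrom X u v l

theorem Conn.refl (u : V) : G.Conn X u u :=
  ⟨[], .nil u⟩

theorem Conn.symm (h : G.Conn X u v) : G.Conn X v u :=
  let ⟨_, hl⟩ := h; ⟨_, hl.reverse⟩

theorem Conn.trans (h : G.Conn X u v) (h' : G.Conn X v w) : G.Conn X u w :=
  let ⟨_, hl⟩ := h; let ⟨_, hl'⟩ := h'; ⟨_, hl.append hl'⟩

theorem Conn.mono (hXY : X ⊆ Y) (h : G.Conn X u v) : G.Conn Y u v :=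
  let ⟨_, hl⟩ := h; ⟨_, hl.mono hXY⟩

theorem conn_src_tgt (he : e ∈ X) : G.Conn X (G.src e) (G.tgt e) :=
  ⟨_, isWalkFrom_singleton (s := (e, true)) he⟩

theorem conn_stepHead_stepLast_iff (e : E) (b : Bool) :
    G.Conn X (G.stepHead (e, b)) (G.stepLast (e, b)) ↔ G.Conn X (G.src e) (G.tgt e) := by
  cases b
  · exact ⟨Conn.symm, Conn.symm⟩
  · exact Iff.rfl

def connSetoid (G : GG V E) (X : Set E) : Setoid V where
  r := G.Conn X
  iseqv := ⟨Conn.refl, Conn.symm, Conn.trans⟩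

theorem stepHead_mem_VSet {s : E × Bool} (hs : s.1 ∈ X) : G.stepHead s ∈ G.VSet X :=
  ⟨s.1, hs, by unfold stepHead; split <;> simp⟩

theorem stepLast_mem_VSet {s : E × Bool} (hs : s.1 ∈ X) : G.stepLast s ∈ G.VSet X :=
  ⟨s.1, hs, by unfold stepLast; split <;> simp⟩

theorem Conn.mem_VSet (h : G.Conn X u v) (hu : u ∈ G.VSet X) : v ∈ G.VSet X := by
  obtain ⟨l, hl⟩ := h
  induction hl with
  | nil => exact hu
  | cons hs _ _ ih => exact ih (stepLast_mem_VSet hs)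

theorem Conn.eq_of_notMem_VSet (h : G.Conn X u v) (hu : u ∉ G.VSet X) : u = v := by
  obtain ⟨l, hl⟩ := h
  cases hl with
  | nil => rfl
  | cons hs h1 _ => exact absurd (h1 ▸ stepHead_mem_VSet hs) hu

theorem mem_vertexFinset [DecidableEq V] {F : Finset E} {v : V} :
    v ∈ G.vertexFinset F ↔ v ∈ G.VSet (F : Set E) := by
  simp only [vertexFinset, Finset.mem_union, Finset.mem_image, VSet, Set.mem_ofPred_eq,
    Finset.mem_coe]
  aesop

theorem numComp_add_card_notMem_vertexFinset [Finite V] [DecidableEq V] (F : Finset E) :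
    G.numComp F + Nat.card {v // v ∉ G.vertexFinset F} =
      Nat.card (Quotient (G.connSetoid (F : Set E))) := by
  let toClass : Quot (G.compRel F) ⊕ {v // v ∉ G.vertexFinset F} →
      Quotient (G.connSetoid (F : Set E)) :=
    Sum.elim (Quot.lift (fun x => Quotient.mk _ (G.src x.1)) fun _ _ h => Quotient.sound h)
      fun v => Quotient.mk _ v.1
  have hsrc (x : {x // x ∈ F}) : G.src x.1 ∈ G.VSet (F : Set E) := ⟨x.1, x.2, .inl rfl⟩
  have hbij : Function.Bijective toClass := by
    constructor
    · rintro (x | ⟨v, hv⟩) (y | ⟨v', hv'⟩) h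
      · induction x using Quot.ind
        induction y using Quot.ind
        exact congrArg Sum.inl (Quot.sound (Quotient.exact h))
      · induction x using Quot.ind
        exact absurd (mem_vertexFinset.2 ((Quotient.exact h).mem_VSet (hsrc _))) hv'
      · induction y using Quot.ind
        exact absurd (mem_vertexFinset.2 ((Quotient.exact h).symm.mem_VSet (hsrc _))) hv
      · exact congrArg Sum.inr
          (Subtype.ext ((Quotient.exact h).eq_of_notMem_VSet (mt mem_vertexFinset.2 hv)))
    · rintro ⟨v⟩
      by_cases hv : v ∈ G.vertexFinset F
      · obtain ⟨f, hf, hfv⟩ := mem_vertexFinset.1 hv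
        refine ⟨.inl (Quot.mk _ ⟨f, hf⟩), Quotient.sound ?_⟩
        rcases hfv with rfl | rfl
        exacts [Conn.refl _, conn_src_tgt hf]
      · exact ⟨.inr ⟨v, hv⟩, rfl⟩
  rw [numComp, ← Nat.card_sum, Nat.card_congr (Equiv.ofBijective toClass hbij)]

section

variable {Γ : Type*} [Group Γ] (ψ : E → Γ)

def stepGain (s : E × Bool) : Γ :=
  if s.2 then ψ s.1 else (ψ s.1)⁻¹

@[simp]
theorem gainOf_nil : gainOf ψ [] = 1 :=
  rfl

theorem gainOf_cons (s : E × Bool) (l : List (E × Bool)) :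
    gainOf ψ (s :: l) = stepGain ψ s * gainOf ψ l :=
  rfl

theorem stepGain_not (e : E) (b : Bool) : stepGain ψ (e, !b) = (stepGain ψ (e, b))⁻¹ := by
  cases b <;> simp [stepGain]

theorem gainOf_append (l l' : List (E × Bool)) :
    gainOf ψ (l ++ l') = gainOf ψ l * gainOf ψ l' := by
  induction l with
  | nil => simp
  | cons s l ih => rw [List.cons_append, gainOf_cons, gainOf_cons, ih, mul_assoc]

theorem gainOf_reverseSteps (l : List (E × Bool)) :
    gainOf ψ (reverseSteps l) = (gainOf ψ l)⁻¹ := by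
  induction l with
  | nil => simp [reverseSteps]
  | cons s l ih =>
    have hrev : reverseSteps (s :: l) = reverseSteps l ++ [(s.1, !s.2)] := by
      simp [reverseSteps]
    rw [hrev, gainOf_append, ih, gainOf_cons, gainOf_nil, mul_one, stepGain_not, gainOf_cons,
      mul_inv_rev]

theorem gainOf_mem_allWalkGroup {l : List (E × Bool)} (h : G.IsWalkFrom X v v l) :
    gainOf ψ l ∈ G.allWalkGroup ψ X :=
  Subgroup.subset_closure ⟨v, l, h, rfl⟩

theorem allWalkGroup_mono (hXY : X ⊆ Y) : G.allWalkGroup ψ X ≤ G.allWalkGroup ψ Y :=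
  Subgroup.closure_mono fun _ ⟨v, l, hl, hg⟩ => ⟨v, l, hl.mono hXY, hg⟩

theorem ellMu_eq [Fintype V] [DecidableEq V] {μ : Set Γ → ℝ} (F : Finset E) :
    G.ellMu ψ μ F = Fintype.card V - Nat.card (Quotient (G.connSetoid (F : Set E))) +
      μ ↑(G.allWalkGroup ψ ↑F) := by
  have hcompl :
      Nat.card {v // v ∉ G.vertexFinset F} + (G.vertexFinset F).card = Fintype.card V := by
    simp [Nat.sub_add_cancel (Finset.card_le_univ _)]
  rw [ellMu, ← numComp_add_card_notMem_vertexFinset, ← hcompl]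
  push_cast
  ring

end

variable {Γ : Type*} [CommGroup Γ] (ψ : E → Γ)

theorem IsWalkFrom.exists_gainOf_eq_mul_zpow (γ : Γ)
    (hstep : ∀ s : E × Bool, s.1 ∈ Y → ∃ (P : List (E × Bool)) (k : ℤ),
      G.IsWalkFrom X (G.stepHead s) (G.stepLast s) P ∧ stepGain ψ s = gainOf ψ P * γ ^ k)
    {W : List (E × Bool)} (hW : G.IsWalkFrom Y u w W) :
    ∃ (W' : List (E × Bool)) (k : ℤ), G.IsWalkFrom X u w W' ∧ gainOf ψ W = gainOf ψ W' * γ ^ k := by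
  induction hW with
  | nil v => exact ⟨[], 0, .nil v, by simp⟩
  | cons hs h1 _ ih =>
    obtain ⟨P, k, hP, hsP⟩ := hstep _ hs
    obtain ⟨W', k', hW', hg⟩ := ih
    refine ⟨P ++ W', k + k', h1 ▸ hP.append hW', ?_⟩
    rw [gainOf_cons, gainOf_append, hsP, hg, zpow_add, mul_mul_mul_comm]

theorem exists_walk_stepGain_eq {l₀ : List (E × Bool)}
    (hl₀ : G.IsWalkFrom X (G.src e) (G.tgt e) l₀) (s : E × Bool) (hs : s.1 ∈ insert e X) :
    ∃ (P : List (E × Bool)) (k : ℤ), G.IsWalkFrom X (G.stepHead s) (G.stepLast s) P ∧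
      stepGain ψ s = gainOf ψ P * ((gainOf ψ l₀)⁻¹ * ψ e) ^ k := by
  obtain ⟨f, b⟩ := s
  rcases hs with rfl | hf
  · cases b
    · refine ⟨reverseSteps l₀, -1, hl₀.reverse, ?_⟩
      rw [zpow_neg_one, gainOf_reverseSteps, ← mul_inv, mul_inv_cancel_left]
      rfl
    · exact ⟨l₀, 1, hl₀, by rw [zpow_one, mul_inv_cancel_left]; rfl⟩
  · exact ⟨[(f, b)], 0, isWalkFrom_singleton hf, by simp [gainOf_cons]⟩

theorem allWalkGroup_insert_of_walk {l₀ : List (E × Bool)}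
    (hl₀ : G.IsWalkFrom X (G.src e) (G.tgt e) l₀) :
    G.allWalkGroup ψ (insert e X) =
      Subgroup.closure (insert ((gainOf ψ l₀)⁻¹ * ψ e) (G.allWalkGroup ψ X : Set Γ)) := by
  apply le_antisymm
  · refine (Subgroup.closure_le _).2 ?_
    rintro _ ⟨v, W, hW, rfl⟩
    obtain ⟨W', k, hW', hg⟩ :=
      hW.exists_gainOf_eq_mul_zpow ψ _ (exists_walk_stepGain_eq ψ hl₀)
    rw [hg]
    exact mul_mem
      (Subgroup.subset_closure (Set.mem_insert_of_mem _ (gainOf_mem_allWalkGroup ψ hW')))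
      (zpow_mem (Subgroup.subset_closure (Set.mem_insert _ _)) k)
  · refine (Subgroup.closure_le _).2
      (Set.insert_subset ?_ (allWalkGroup_mono ψ (Set.subset_insert e X)))
    have hcycle : G.IsWalkFrom (insert e X) (G.tgt e) (G.tgt e) (reverseSteps l₀ ++ [(e, true)]) :=
      (hl₀.reverse.mono (Set.subset_insert e X)).append
        (isWalkFrom_singleton (s := (e, true)) (Set.mem_insert e X))
    simpa [gainOf_append, gainOf_reverseSteps, gainOf_cons, stepGain] using
      gainOf_mem_allWalkGroup ψ hcycle

theorem connSetoid_insert_of_conn (hc : G.Conn X (G.src e) (G.tgt e)) :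
    G.connSetoid (insert e X) = G.connSetoid X := by
  obtain ⟨l₀, hl₀⟩ := hc
  refine Setoid.ext fun u w => ⟨fun ⟨W, hW⟩ => ?_, Conn.mono (Set.subset_insert e X)⟩
  -- connectivity is the gain statement for the trivial gain function
  obtain ⟨W', -, hW', -⟩ := hW.exists_gainOf_eq_mul_zpow (fun _ => (1 : Unit)) 1
    (exists_walk_stepGain_eq _ hl₀)
  exact ⟨W', hW'⟩

/-- Since `e` joins two components of `X`, a walk crossing `e` must cross it back before it can
return, and the part in between is a closed walk of `X`. -/
theorem IsWalkFrom.of_insert_of_not_conn (hnc : ¬ G.Conn X (G.src e) (G.tgt e))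
    {W : List (E × Bool)} (hW : G.IsWalkFrom (insert e X) u w W) :
    (∃ W', G.IsWalkFrom X u w W' ∧ ∃ h ∈ G.allWalkGroup ψ X, gainOf ψ W = gainOf ψ W' * h) ∨
    ∃ b W₁ W₂, G.IsWalkFrom X u (G.stepHead (e, b)) W₁ ∧
      G.IsWalkFrom X (G.stepLast (e, b)) w W₂ ∧ ∃ h ∈ G.allWalkGroup ψ X,
        gainOf ψ W = gainOf ψ W₁ * stepGain ψ (e, b) * gainOf ψ W₂ * h := by
  induction hW with
  | nil v => exact .inl ⟨[], .nil v, 1, one_mem _, by simp⟩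
  | @cons u w s l hs h1 _ ih =>
    by_cases hse : s.1 = e
    · obtain ⟨f, b⟩ := s
      obtain rfl : f = e := hse
      subst h1
      rcases ih with ⟨W', hW', h, hh, hg⟩ | ⟨b', W₁, W₂, hW₁, hW₂, h, hh, hg⟩
      · exact .inr ⟨b, [], W', .nil _, hW', h, hh, by rw [gainOf_cons, hg]; simp [mul_assoc]⟩
      · rcases Bool.eq_or_eq_not b' b with rfl | rfl
        · exact absurd ((conn_stepHead_stepLast_iff _ b').1 (Conn.symm ⟨W₁, hW₁⟩)) hnc
        · rw [stepHead_not] at hW₁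
          rw [stepLast_not] at hW₂
          refine .inl ⟨W₂, hW₂, gainOf ψ W₁ * h,
            mul_mem (gainOf_mem_allWalkGroup ψ hW₁) hh, ?_⟩
          rw [gainOf_cons, hg, stepGain_not, mul_comm (gainOf ψ W₁), mul_assoc, mul_assoc,
            mul_inv_cancel_left, mul_left_comm]
    · have hsX : s.1 ∈ X := hs.resolve_left hse
      rcases ih with ⟨W', hW', h, hh, hg⟩ | ⟨b, W₁, W₂, hW₁, hW₂, h, hh, hg⟩
      · exact .inl ⟨s :: W', .cons hsX h1 hW', h, hh,
          by rw [gainOf_cons, gainOf_cons, hg, mul_assoc]⟩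
      · exact .inr ⟨b, s :: W₁, W₂, .cons hsX h1 hW₁, hW₂, h, hh,
          by simp only [gainOf_cons, hg, mul_assoc]⟩

theorem allWalkGroup_insert_of_not_conn (hnc : ¬ G.Conn X (G.src e) (G.tgt e)) :
    G.allWalkGroup ψ (insert e X) = G.allWalkGroup ψ X := by
  refine le_antisymm ((Subgroup.closure_le _).2 ?_) (allWalkGroup_mono ψ (Set.subset_insert e X))
  rintro _ ⟨v, W, hW, rfl⟩
  rcases hW.of_insert_of_not_conn ψ hnc with ⟨W', hW', h, hh, hg⟩ | ⟨b, W₁, W₂, hW₁, hW₂, -⟩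
  · rw [hg]
    exact mul_mem (gainOf_mem_allWalkGroup ψ hW') hh
  · exact absurd ((conn_stepHead_stepLast_iff e b).1 (Conn.symm ⟨_, hW₂.append hW₁⟩)) hnc

theorem conn_insert_of_not_conn (hnc : ¬ G.Conn X (G.src e) (G.tgt e))
    (h : G.Conn (insert e X) u w) :
    G.Conn X u w ∨ (G.Conn X u (G.src e) ∧ G.Conn X (G.tgt e) w) ∨
      (G.Conn X u (G.tgt e) ∧ G.Conn X (G.src e) w) := by
  obtain ⟨W, hW⟩ := h
  rcases hW.of_insert_of_not_conn (fun _ => (1 : Unit)) hnc with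
    ⟨W', hW', -⟩ | ⟨b, W₁, W₂, hW₁, hW₂, -⟩
  · exact .inl ⟨W', hW'⟩
  · cases b
    · exact .inr (.inr ⟨⟨W₁, hW₁⟩, ⟨W₂, hW₂⟩⟩)
    · exact .inr (.inl ⟨⟨W₁, hW₁⟩, ⟨W₂, hW₂⟩⟩)

theorem card_quotient_connSetoid_insert_of_not_conn [Finite V]
    (hnc : ¬ G.Conn X (G.src e) (G.tgt e)) :
    Nat.card (Quotient (G.connSetoid X)) = Nat.card (Quotient (G.connSetoid (insert e X))) + 1 :=
  Setoid.card_quotient_eq_add_one (fun _ _ => Conn.mono (Set.subset_insert e X)) hnc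
    (conn_src_tgt (Set.mem_insert e X)) fun _ _ => conn_insert_of_not_conn hnc

variable [Fintype V] [DecidableEq V] [DecidableEq E] {μ : Set Γ → ℝ} {F F' : Finset E}

theorem ellMu_insert_of_walk {l₀ : List (E × Bool)}
    (hl₀ : G.IsWalkFrom ↑F (G.src e) (G.tgt e) l₀) :
    G.ellMu ψ μ (insert e F) = G.ellMu ψ μ F - μ ↑(G.allWalkGroup ψ ↑F) +
      μ ↑(Subgroup.closure (insert ((gainOf ψ l₀)⁻¹ * ψ e) (G.allWalkGroup ψ ↑F : Set Γ))) := by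
  rw [ellMu_eq, ellMu_eq, Finset.coe_insert, connSetoid_insert_of_conn ⟨l₀, hl₀⟩,
    allWalkGroup_insert_of_walk ψ hl₀]
  ring

theorem ellMu_insert_of_not_conn (hnc : ¬ G.Conn ↑F (G.src e) (G.tgt e)) :
    G.ellMu ψ μ (insert e F) = G.ellMu ψ μ F + 1 := by
  rw [ellMu_eq, ellMu_eq, Finset.coe_insert, allWalkGroup_insert_of_not_conn ψ hnc,
    card_quotient_connSetoid_insert_of_not_conn hnc]
  push_cast
  ring

theorem ellMu_le_insert (hμ : SymPolymatroidal μ) (F : Finset E) (e : E) :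
    G.ellMu ψ μ F ≤ G.ellMu ψ μ (insert e F) := by
  by_cases hc : G.Conn ↑F (G.src e) (G.tgt e)
  · obtain ⟨l₀, hl₀⟩ := hc
    rw [ellMu_insert_of_walk ψ hl₀]
    linarith [hμ.le_closure_insert (G.allWalkGroup ψ ↑F) ((gainOf ψ l₀)⁻¹ * ψ e)]
  · rw [ellMu_insert_of_not_conn ψ hc]
    linarith

theorem ellMu_insert_sub_le (hμ : SymPolymatroidal μ) (hμ1 : ∀ γ : Γ, μ {γ} ≤ 1)
    (hFF' : F ⊆ F') (e : E) :
    G.ellMu ψ μ (insert e F') - G.ellMu ψ μ F' ≤ G.ellMu ψ μ (insert e F) - G.ellMu ψ μ F := by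
  have hsub : (F : Set E) ⊆ F' := Finset.coe_subset.2 hFF'
  by_cases hc : G.Conn ↑F (G.src e) (G.tgt e)
  · obtain ⟨l₀, hl₀⟩ := hc
    rw [ellMu_insert_of_walk ψ hl₀, ellMu_insert_of_walk ψ (hl₀.mono hsub)]
    linarith [hμ.closure_insert_sub_le (allWalkGroup_mono (G := G) ψ hsub) ((gainOf ψ l₀)⁻¹ * ψ e)]
  · rw [ellMu_insert_of_not_conn ψ hc]
    by_cases hc' : G.Conn ↑F' (G.src e) (G.tgt e)
    · obtain ⟨l₀, hl₀⟩ := hc'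
      rw [ellMu_insert_of_walk ψ hl₀]
      linarith [hμ.closure_insert_le_add_one hμ1 (G.allWalkGroup ψ ↑F') ((gainOf ψ l₀)⁻¹ * ψ e)]
    · rw [ellMu_insert_of_not_conn ψ hc']
      linarith

end GG

theorem ellMu_monotone_submodular_general {V E Γ : Type*} [CommGroup Γ]
    [Fintype V] [DecidableEq V] [DecidableEq E]
    (G : GG V E) (ψ : E → Γ) (μ : Set Γ → ℝ)
    (hμ : SymPolymatroidal μ) (hμ1 : ∀ γ : Γ, μ {γ} ≤ 1) :
    (∀ F₁ F₂ : Finset E, F₁ ⊆ F₂ → G.ellMu ψ μ F₁ ≤ G.ellMu ψ μ F₂) ∧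
    (∀ F₁ F₂ : Finset E,
      G.ellMu ψ μ (F₁ ∪ F₂) + G.ellMu ψ μ (F₁ ∩ F₂) ≤ G.ellMu ψ μ F₁ + G.ellMu ψ μ F₂) :=
  ⟨fun _ _ h => Finset.monotone_of_le_insert (G.ellMu_le_insert ψ hμ) h,
    Finset.submodular_of_insert_sub_le fun _ _ e h => G.ellMu_insert_sub_le ψ hμ hμ1 h e⟩

/-- Theorem 7.2: for an abelian group `Γ`, a `Γ`-gain graph `(G,ψ)` and a symmetric
polymatroidal function `μ` with `μ({γ}) ≤ 1` for all `γ`, the function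
`ℓ_μ(F) = |V(F)| − c(F) + μ(⟨⟨F⟩⟩)` is monotone and submodular. -/
theorem ellMu_monotone_submodular {V E Γ : Type*} [CommGroup Γ]
    [Fintype V] [Fintype E] [DecidableEq V] [DecidableEq E]
    (G : GG V E) (ψ : E → Γ) (μ : Set Γ → ℝ)
    (hμ : SymPolymatroidal μ) (hμ1 : ∀ γ : Γ, μ {γ} ≤ 1) :
    (∀ F₁ F₂ : Finset E, F₁ ⊆ F₂ → G.ellMu ψ μ F₁ ≤ G.ellMu ψ μ F₂) ∧
    (∀ F₁ F₂ : Finset E,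
      G.ellMu ψ μ (F₁ ∪ F₂) + G.ellMu ψ μ (F₁ ∩ F₂) ≤ G.ellMu ψ μ F₁ + G.ellMu ψ μ F₂) :=
  ellMu_monotone_submodular_general G ψ μ hμ hμ1
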